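/- Let V be a real Hilbert space, u_k, u_{k+1} ∈ V, L_k ≥ 0, α > 0, β > 0, and suppose α⟨u_{k+1}, v⟩_V + L_k⟨u_{k+1} − u_k, v⟩_V + F'(u_k)v + 2β∫_Ω ψ'_{ε_k}(u_k²)·u_{k+1}·v dx = 0 for all v ∈ V, and F(u_{k+1}) ≤ F(u_k) + F'(u_k)(u_{k+1} − u_k) + L_k‖u_{k+1} − u_k‖_V². Then, with Φ_ε(u) := F(u) + (α/2)‖u‖_V² + β∫_Ω ψ_ε(u²) dx and ε_{k+1} ≤ ε_k, one has Φ_{ε_{k+1}}(u_{k+1}) + (α/2)‖u_{k+1} − u_k‖_V² + β∫_Ω ψ'_{ε_k}(u_k²)(u_{k+1} − u_k)² dx ≤ Φ_{ε_k}(u_k). -/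

import Mathlib

/-! Test the Euler–Lagrange equation with `v = u₂ - u₁`. The `α`-terms become
`(α/2)(‖u₂‖² - ‖u₁‖² + ‖u₂ - u₁‖²)` by polarization, and the descent inequality absorbs
`F' u₁ (u₂ - u₁)`, the `L`-terms cancelling. In the penalty term write
`2 y (y - x) = (y - x)² + (y² - x²)`: the tangent inequality of the concave function `ψ_{ε₁}` at
`x²`, together with `ψ_{ε₂} ≤ ψ_{ε₁}`, bounds `ψ_{ε₂}(y²)` by `ψ_{ε₁}(x²) + ψ'_{ε₁}(x²)(y² - x²)`. -/

open Set MeasureTheory Filter Topology RealInnerProductSpace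

noncomputable def psiSm (p ε t : ℝ) : ℝ :=
  if t < ε ^ 2 then (p / 2) * t / ε ^ (2 - p) + (1 - p / 2) * ε ^ p else t ^ (p / 2)

noncomputable def psiSmDeriv (p ε t : ℝ) : ℝ :=
  if t = 0 then (p / 2) * ε ^ (p - 2) else (p / 2) * min (ε ^ (p - 2)) (t ^ ((p - 2) / 2))

lemma rpow_le_rpow_add_mul_rpow_sub_one {q a b : ℝ} (hq0 : 0 ≤ q) (hq1 : q ≤ 1)
    (ha : 0 < a) (hb : 0 ≤ b) :
    b ^ q ≤ a ^ q + q * a ^ (q - 1) * (b - a) := by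
  have bernoulli := rpow_one_add_le_one_add_mul_self
    (by linarith [div_nonneg hb ha.le] : -1 ≤ b / a - 1) hq0 hq1
  rw [add_sub_cancel, Real.div_rpow hb ha.le, div_le_iff₀ (by positivity)] at bernoulli
  calc b ^ q ≤ (1 + q * (b / a - 1)) * a ^ q := bernoulli
    _ = a ^ q + q * (a ^ q / a) * (b - a) := by field_simp
    _ = a ^ q + q * a ^ (q - 1) * (b - a) := by rw [Real.rpow_sub_one ha.ne']

section SmoothedPower

variable {p ε t : ℝ}

lemma sq_rpow_div_two (hε : 0 < ε) (z : ℝ) : (ε ^ 2) ^ (z / 2) = ε ^ z := by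
  rw [← Real.rpow_natCast_mul hε.le]
  push_cast
  ring_nf

lemma psiSm_of_lt_sq (hε : 0 < ε) (ht : t < ε ^ 2) :
    psiSm p ε t = ε ^ p + p / 2 * ε ^ (p - 2) * (t - ε ^ 2) := by
  have hsplit : ε ^ p = ε ^ (p - 2) * ε ^ 2 := by
    rw [← Real.rpow_natCast, ← Real.rpow_add hε]; norm_num
  rw [psiSm, if_pos ht, div_eq_mul_inv, ← Real.rpow_neg hε.le, neg_sub, hsplit]
  ring

lemma psiSm_of_sq_le (ht : ε ^ 2 ≤ t) : psiSm p ε t = t ^ (p / 2) :=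
  if_neg ht.not_gt

lemma rpow_div_two_le_tangent (hp0 : 0 ≤ p) (hp2 : p ≤ 2) (hε : 0 < ε) (ht : 0 ≤ t) :
    t ^ (p / 2) ≤ ε ^ p + p / 2 * ε ^ (p - 2) * (t - ε ^ 2) := by
  have h := rpow_le_rpow_add_mul_rpow_sub_one (by linarith : 0 ≤ p / 2) (by linarith)
    (by positivity : 0 < ε ^ 2) ht
  rwa [sq_rpow_div_two hε, show p / 2 - 1 = (p - 2) / 2 by ring, sq_rpow_div_two hε] at h

lemma rpow_sub_two_div_two_le (hp2 : p ≤ 2) (hε : 0 < ε) (ht : ε ^ 2 ≤ t) :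
    t ^ ((p - 2) / 2) ≤ ε ^ (p - 2) := by
  rw [← sq_rpow_div_two hε]
  exact Real.rpow_le_rpow_of_nonpos (by positivity) ht (by linarith)

lemma psiSm_le_tangent (hp0 : 0 ≤ p) (hp2 : p ≤ 2) (hε : 0 < ε) (ht : 0 ≤ t) :
    psiSm p ε t ≤ ε ^ p + p / 2 * ε ^ (p - 2) * (t - ε ^ 2) := by
  rcases lt_or_ge t (ε ^ 2) with h | h
  · exact (psiSm_of_lt_sq hε h).le
  · rw [psiSm_of_sq_le h]
    exact rpow_div_two_le_tangent hp0 hp2 hε ht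

lemma psiSm_nonneg (hp0 : 0 ≤ p) (hp2 : p ≤ 2) (hε : 0 < ε) (ht : 0 ≤ t) :
    0 ≤ psiSm p ε t := by
  rcases lt_or_ge t (ε ^ 2) with h | h
  · rw [psiSm, if_pos h]
    have : 0 ≤ 1 - p / 2 := by linarith
    positivity
  · rw [psiSm_of_sq_le h]
    positivity

lemma psiSmDeriv_of_le_sq (hp2 : p ≤ 2) (hε : 0 < ε) (ht0 : 0 ≤ t) (ht : t ≤ ε ^ 2) :
    psiSmDeriv p ε t = p / 2 * ε ^ (p - 2) := by
  rcases ht0.eq_or_lt with rfl | ht0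
  · exact if_pos rfl
  · rw [psiSmDeriv, if_neg ht0.ne', min_eq_left]
    rw [← sq_rpow_div_two hε]
    exact Real.rpow_le_rpow_of_nonpos ht0 ht (by linarith)

lemma psiSmDeriv_of_sq_le (hp2 : p ≤ 2) (hε : 0 < ε) (ht : ε ^ 2 ≤ t) :
    psiSmDeriv p ε t = p / 2 * t ^ ((p - 2) / 2) := by
  have ht0 : 0 < t := (by positivity : (0 : ℝ) < ε ^ 2).trans_le ht
  rw [psiSmDeriv, if_neg ht0.ne', min_eq_right (rpow_sub_two_div_two_le hp2 hε ht)]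

lemma psiSmDeriv_nonneg (hp0 : 0 ≤ p) (hε : 0 < ε) (ht : 0 ≤ t) : 0 ≤ psiSmDeriv p ε t := by
  unfold psiSmDeriv
  split_ifs
  · positivity
  · have : 0 ≤ min (ε ^ (p - 2)) (t ^ ((p - 2) / 2)) := le_min (by positivity) (by positivity)
    positivity

lemma psiSmDeriv_le (hp0 : 0 ≤ p) (t : ℝ) : psiSmDeriv p ε t ≤ p / 2 * ε ^ (p - 2) := by
  unfold psiSmDeriv
  split_ifs
  · exact le_rfl
  · exact mul_le_mul_of_nonneg_left (min_le_left _ _) (by linarith)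

lemma psiSm_le_add_psiSmDeriv_mul (hp0 : 0 ≤ p) (hp2 : p ≤ 2) (hε : 0 < ε) {a b : ℝ}
    (ha : 0 ≤ a) (hb : 0 ≤ b) :
    psiSm p ε b ≤ psiSm p ε a + psiSmDeriv p ε a * (b - a) := by
  rcases lt_or_ge a (ε ^ 2) with haε | haε
  · rw [psiSm_of_lt_sq hε haε, psiSmDeriv_of_le_sq hp2 hε ha haε.le]
    linarith [psiSm_le_tangent hp0 hp2 hε hb]
  have ha' : 0 < a := (by positivity : (0 : ℝ) < ε ^ 2).trans_le haε
  have tangent_at_a :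
      ∀ s, 0 ≤ s → s ^ (p / 2) ≤ a ^ (p / 2) + p / 2 * a ^ ((p - 2) / 2) * (s - a) := by
    intro s hs
    rw [show (p - 2) / 2 = p / 2 - 1 by ring]
    exact rpow_le_rpow_add_mul_rpow_sub_one (by linarith) (by linarith) ha' hs
  rw [psiSm_of_sq_le haε, psiSmDeriv_of_sq_le hp2 hε haε]
  rcases lt_or_ge b (ε ^ 2) with hbε | hbε
  · -- below `ε ^ 2` the tangent at `a` is no steeper than `psiSm`, and it lies above it at `ε ^ 2`
    have hslope : p / 2 * a ^ ((p - 2) / 2) ≤ p / 2 * ε ^ (p - 2) :=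
      mul_le_mul_of_nonneg_left (rpow_sub_two_div_two_le hp2 hε haε) (by linarith)
    have hε2 := tangent_at_a (ε ^ 2) (by positivity)
    rw [sq_rpow_div_two hε] at hε2
    rw [psiSm_of_lt_sq hε hbε]
    linarith [mul_le_mul_of_nonneg_right hslope (sub_nonneg.2 hbε.le)]
  · rw [psiSm_of_sq_le hbε]
    exact tangent_at_a b hb

lemma psiSm_le_psiSm_of_le {ε' : ℝ} (hp0 : 0 ≤ p) (hp2 : p ≤ 2) (hε : 0 < ε) (hεε' : ε ≤ ε')
    (ht : 0 ≤ t) : psiSm p ε t ≤ psiSm p ε' t := by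
  have hε' : 0 < ε' := hε.trans_le hεε'
  rcases lt_or_ge t (ε' ^ 2) with h' | h'
  · rw [psiSm_of_lt_sq hε' h']
    rcases lt_or_ge t (ε ^ 2) with h | h
    · have hslope : p / 2 * ε' ^ (p - 2) ≤ p / 2 * ε ^ (p - 2) :=
        mul_le_mul_of_nonneg_left (Real.rpow_le_rpow_of_nonpos hε hεε' (by linarith))
          (by linarith)
      have hε2 := rpow_div_two_le_tangent (ε := ε') hp0 hp2 hε' (by positivity : 0 ≤ ε ^ 2)
      rw [sq_rpow_div_two hε] at hε2
      rw [psiSm_of_lt_sq hε h]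
      linarith [mul_le_mul_of_nonneg_right hslope (sub_nonneg.2 h.le)]
    · rw [psiSm_of_sq_le h]
      exact rpow_div_two_le_tangent hp0 hp2 hε' ht
  · rw [psiSm_of_sq_le h', psiSm_of_sq_le ((pow_le_pow_left₀ hε.le hεε' 2).trans h')]

end SmoothedPower

lemma psiSm_sq_add_psiSmDeriv_mul_sq_le {p ε ε' : ℝ} (hp0 : 0 ≤ p) (hp2 : p ≤ 2) (hε : 0 < ε)
    (hεε' : ε ≤ ε') (x y : ℝ) :
    psiSm p ε (y ^ 2) + psiSmDeriv p ε' (x ^ 2) * (y - x) ^ 2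
      ≤ psiSm p ε' (x ^ 2) + 2 * (psiSmDeriv p ε' (x ^ 2) * y * (y - x)) := by
  linear_combination psiSm_le_psiSm_of_le hp0 hp2 hε hεε' (sq_nonneg y)
    + psiSm_le_add_psiSmDeriv_mul hp0 hp2 (hε.trans_le hεε') (sq_nonneg x) (sq_nonneg y)

lemma measurable_psiSm (p ε : ℝ) : Measurable (psiSm p ε) :=
  Measurable.ite (measurableSet_lt measurable_id measurable_const)
    (((measurable_const.mul measurable_id).div_const _).add_const _) (by fun_prop)

lemma measurable_psiSmDeriv (p ε : ℝ) : Measurable (psiSmDeriv p ε) :=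
  Measurable.ite (measurableSet_eq_fun measurable_id measurable_const) measurable_const
    (measurable_const.mul (measurable_const.min (by fun_prop)))

section Integrals

variable {X : Type*} [MeasurableSpace X] {μ : Measure X} {p ε : ℝ}

lemma integrable_psiSm_sq [IsFiniteMeasure μ] (hp0 : 0 ≤ p) (hp2 : p ≤ 2) (hε : 0 < ε)
    {f : X → ℝ} (hf : MemLp f 2 μ) : Integrable (fun x => psiSm p ε (f x ^ 2)) μ := by
  refine Integrable.mono' ((hf.integrable_sq.const_mul (p / 2 * ε ^ (p - 2))).add
      (integrable_const (ε ^ p - p / 2 * ε ^ (p - 2) * ε ^ 2)))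
    ((measurable_psiSm p ε).comp_aemeasurable (hf.aemeasurable.pow_const 2)).aestronglyMeasurable
    (Eventually.of_forall fun x => ?_)
  rw [Real.norm_of_nonneg (psiSm_nonneg hp0 hp2 hε (sq_nonneg _)), Pi.add_apply]
  linarith [psiSm_le_tangent hp0 hp2 hε (sq_nonneg (f x))]

lemma integrable_psiSmDeriv_sq_mul (hp0 : 0 ≤ p) (hε : 0 < ε) {f h : X → ℝ}
    (hf : AEMeasurable f μ) (hh : Integrable h μ) :
    Integrable (fun x => psiSmDeriv p ε (f x ^ 2) * h x) μ :=
  hh.bdd_mul ((measurable_psiSmDeriv p ε).comp_aemeasurable (hf.pow_const 2)).aestronglyMeasurable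
    (Eventually.of_forall fun x => by
      rw [Real.norm_of_nonneg (psiSmDeriv_nonneg hp0 hε (sq_nonneg _))]
      exact psiSmDeriv_le hp0 _)

theorem integral_psiSm_sq_add_integral_psiSmDeriv_mul_sq_le [IsFiniteMeasure μ] {ε' : ℝ}
    (hp0 : 0 ≤ p) (hp2 : p ≤ 2) (hε : 0 < ε) (hεε' : ε ≤ ε') {f g : X → ℝ}
    (hf : MemLp f 2 μ) (hg : MemLp g 2 μ) :
    ∫ x, psiSm p ε (g x ^ 2) ∂μ + ∫ x, psiSmDeriv p ε' (f x ^ 2) * (g x - f x) ^ 2 ∂μ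
      ≤ ∫ x, psiSm p ε' (f x ^ 2) ∂μ
        + 2 * ∫ x, psiSmDeriv p ε' (f x ^ 2) * g x * (g x - f x) ∂μ := by
  have hε' : 0 < ε' := hε.trans_le hεε'
  have hI₁ := integrable_psiSm_sq hp0 hp2 hε hg
  have hI₂ : Integrable (fun x => psiSmDeriv p ε' (f x ^ 2) * (g x - f x) ^ 2) μ :=
    integrable_psiSmDeriv_sq_mul hp0 hε' hf.aemeasurable (hg.sub hf).integrable_sq
  have hI₃ := integrable_psiSm_sq hp0 hp2 hε' hf
  have hI₄ : Integrable (fun x => psiSmDeriv p ε' (f x ^ 2) * g x * (g x - f x)) μ := by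
    simpa only [mul_assoc, Pi.mul_apply, Pi.sub_apply] using
      integrable_psiSmDeriv_sq_mul hp0 hε' hf.aemeasurable (hg.integrable_mul (hg.sub hf))
  rw [← integral_add hI₁ hI₂, ← integral_const_mul, ← integral_add hI₃ (hI₄.const_mul 2)]
  exact integral_mono (hI₁.add hI₂) (hI₃.add (hI₄.const_mul 2))
    fun x => psiSm_sq_add_psiSmDeriv_mul_sq_le hp0 hp2 hε hεε' (f x) (g x)

end Integrals

theorem stmt13_general (d : ℕ) (Ω : Set (Fin d → ℝ))
    (hfin : volume Ω < ⊤) (p : ℝ) (hp : 0 < p) (hp1 : p < 1)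
    {V : Type*} [NormedAddCommGroup V] [InnerProductSpace ℝ V]
    (ι : V →L[ℝ] Lp ℝ 2 (volume.restrict Ω))
    (α β L : ℝ) (hβ : 0 < β)
    (ε₁ ε₂ : ℝ) (hε₂ : 0 < ε₂) (hεle : ε₂ ≤ ε₁)
    (F : V → ℝ) (F' : V → V →L[ℝ] ℝ)
    (u₁ u₂ : V)
    (hopt : ∀ v : V,
      α * ⟪u₂, v⟫ + L * ⟪u₂ - u₁, v⟫ + F' u₁ v
        + 2 * β * ∫ x, psiSmDeriv p ε₁ (((ι u₁) x) ^ 2) * (ι u₂) x * (ι v) x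
            ∂(volume.restrict Ω) = 0)
    (hdesc : F u₂ ≤ F u₁ + F' u₁ (u₂ - u₁) + L * ‖u₂ - u₁‖ ^ 2) :
    (F u₂ + α / 2 * ‖u₂‖ ^ 2
        + β * ∫ x, psiSm p ε₂ (((ι u₂) x) ^ 2) ∂(volume.restrict Ω))
      + α / 2 * ‖u₂ - u₁‖ ^ 2
      + β * ∫ x, psiSmDeriv p ε₁ (((ι u₁) x) ^ 2) * ((ι u₂) x - (ι u₁) x) ^ 2
          ∂(volume.restrict Ω)
    ≤ F u₁ + α / 2 * ‖u₁‖ ^ 2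
        + β * ∫ x, psiSm p ε₁ (((ι u₁) x) ^ 2) ∂(volume.restrict Ω) := by
  have : IsFiniteMeasure (volume.restrict Ω) := ⟨by rwa [Measure.restrict_apply_univ]⟩
  have hι : ι (u₂ - u₁) =ᵐ[volume.restrict Ω] fun x => ι u₂ x - ι u₁ x := by
    rw [map_sub]
    exact Lp.coeFn_sub _ _
  have hEuler := hopt (u₂ - u₁)
  rw [real_inner_self_eq_norm_sq, integral_congr_ae (hι.mono fun x hx => congrArg (_ * ·) hx)]
    at hEuler
  have hpolar : 2 * ⟪u₂, u₂ - u₁⟫ = ‖u₂‖ ^ 2 - ‖u₁‖ ^ 2 + ‖u₂ - u₁‖ ^ 2 := by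
    rw [inner_sub_right, real_inner_self_eq_norm_sq, norm_sub_sq_real]
    ring
  have hψ := integral_psiSm_sq_add_integral_psiSmDeriv_mul_sq_le hp.le (by linarith) hε₂ hεle
    (Lp.memLp (ι u₁)) (Lp.memLp (ι u₂))
  linear_combination hdesc + hEuler - α / 2 * hpolar + mul_le_mul_of_nonneg_left hψ hβ.le

theorem stmt13 (d : ℕ) (Ω : Set (Fin d → ℝ)) (hΩ : MeasurableSet Ω)
    (hfin : volume Ω < ⊤) (p : ℝ) (hp : 0 < p) (hp1 : p < 1)
    {V : Type*} [NormedAddCommGroup V] [InnerProductSpace ℝ V] [CompleteSpace V]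
    (ι : V →L[ℝ] Lp ℝ 2 (volume.restrict Ω))
    (α β L : ℝ) (hα : 0 < α) (hβ : 0 < β) (hL : 0 ≤ L)
    (ε₁ ε₂ : ℝ) (hε₁ : 0 < ε₁) (hε₂ : 0 < ε₂) (hεle : ε₂ ≤ ε₁)
    (F : V → ℝ) (F' : V → V →L[ℝ] ℝ) (hF : ∀ v : V, HasFDerivAt F (F' v) v)
    (u₁ u₂ : V)
    (hopt : ∀ v : V,
      α * ⟪u₂, v⟫ + L * ⟪u₂ - u₁, v⟫ + F' u₁ v
        + 2 * β * ∫ x, psiSmDeriv p ε₁ (((ι u₁) x) ^ 2) * (ι u₂) x * (ι v) x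
            ∂(volume.restrict Ω) = 0)
    (hdesc : F u₂ ≤ F u₁ + F' u₁ (u₂ - u₁) + L * ‖u₂ - u₁‖ ^ 2) :
    (F u₂ + α / 2 * ‖u₂‖ ^ 2
        + β * ∫ x, psiSm p ε₂ (((ι u₂) x) ^ 2) ∂(volume.restrict Ω))
      + α / 2 * ‖u₂ - u₁‖ ^ 2
      + β * ∫ x, psiSmDeriv p ε₁ (((ι u₁) x) ^ 2) * ((ι u₂) x - (ι u₁) x) ^ 2
          ∂(volume.restrict Ω)
    ≤ F u₁ + α / 2 * ‖u₁‖ ^ 2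
        + β * ∫ x, psiSm p ε₁ (((ι u₁) x) ^ 2) ∂(volume.restrict Ω) :=
  stmt13_general d Ω hfin p hp hp1 ι α β L hβ ε₁ ε₂ hε₂ hεle F F' u₁ u₂ hopt hdesc
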